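/- Let d ≥ 2, let μ be the uniform probability measure on the unit sphere of the Euclidean space ℝ^d, let n ∈ ℕ, let ω : Fin n → Fin n → ℝ be a symmetric weight function, and let v : Fin n → ℝ^d with ‖v i‖ = 1 for all i. For r on the unit sphere, define the rounded assignment z_r : Fin n → ℝ by z_r i = 1 if ⟨r, v i⟩ ≥ 0 and z_r i = −1 otherwise. Then the expectation over r (with respect to μ) of Cut(z_r) equals (1/π)·∑_{i<j} ω i j · arccos(⟨v i, v j⟩). -/

import Mathlib

/-!
Push `μ` forward to a measure `ν` on `ℝ^d`: it is invariant under all linear isometries and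
`ν {0} = 0`. Since `(1 - z_r i * z_r j) / 2` is the indicator that the hyperplane `r^⊥` separates
`v i` from `v j`, linearity of the integral reduces the claim to: `r^⊥` separates unit vectors
`u`, `w` with probability `arccos ⟪u, w⟫ / π`.

Proper subspaces are `ν`-null: a non-null one `V` of least dimension would have infinitely many
distinct isometric images of the same dimension, all of measure `ν V` and pairwise meeting in
lower-dimensional, hence null, subspaces, which a finite measure cannot carry.

By invariance the separation probability is a function `p` of the angle between `u` and `w`.
For points at angles `0 ≤ a ≤ a + b ≤ π` on a great circle, `r^⊥` separates the outer two iff it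
separates exactly one of the two consecutive pairs; unless `r` is orthogonal to one of the three
points (a null event) it never separates both, as a sinusoid cannot change sign twice within a
half-period.
So `p (a + b) = p a + p b`; being nonnegative, `p` is linear on `[0, π]`, and `p π = 1`
because `r^⊥` separates `u` from `-u` unless `⟪r, u⟫ = 0`.
-/

open MeasureTheory Metric Finset
open scoped RealInnerProductSpace

/-- The cut value of a `{-1,1}`-valued assignment `z` for symmetric weights `ω`. -/
noncomputable def cutVal (n : ℕ) (ω : Fin n → Fin n → ℝ) (z : Fin n → ℝ) : ℝ :=
  (1 / 2) * ∑ i : Fin n, ∑ j : Fin n, if i < j then ω i j * (1 - z i * z j) else 0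

open Module

section FunctionalEquation

variable {f : ℝ → ℝ} {L : ℝ}

theorem apply_div_mul_of_add (hadd : ∀ a b, 0 ≤ a → 0 ≤ b → a + b ≤ L → f (a + b) = f a + f b)
    (hL : 0 < L) {k n : ℕ} (hn : 0 < n) (hkn : k ≤ n) : f (k / n * L) = k / n * f L := by
  have hn' : (0 : ℝ) < n := by exact_mod_cast hn
  have hmul : ∀ k : ℕ, k ≤ n → f (k / n * L) = k * f (L / n) := by
    intro k
    induction k with
    | zero =>
      intro _
      have h00 := hadd 0 0 le_rfl le_rfl (by simpa using hL.le)
      simp only [add_zero, left_eq_add] at h00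
      simp [h00]
    | succ k ih =>
      intro hk
      have hkL : (k + 1 : ℝ) / n ≤ 1 := by rw [div_le_one hn']; exact_mod_cast hk
      have := hadd (k / n * L) (L / n) (by positivity) (by positivity) (by
        calc (k / n * L + L / n : ℝ) = (k + 1) / n * L := by ring
          _ ≤ L := mul_le_of_le_one_left hL.le hkL)
      push_cast
      rw [show ((k : ℝ) + 1) / n * L = k / n * L + L / n by ring, this, ih (by omega)]
      ring
  have hunit : f (L / n) = f L / n := by
    have := hmul n le_rfl
    rw [div_self hn'.ne', one_mul] at this
    rw [this, mul_div_cancel_left₀ _ hn'.ne']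
  rw [hmul k hkn, hunit]
  ring

theorem eq_div_mul_of_add_of_nonneg (hL : 0 < L)
    (hnonneg : ∀ x, 0 ≤ x → x ≤ L → 0 ≤ f x)
    (hadd : ∀ a b, 0 ≤ a → 0 ≤ b → a + b ≤ L → f (a + b) = f a + f b)
    {x : ℝ} (hx0 : 0 ≤ x) (hxL : x ≤ L) : f x = x / L * f L := by
  have hmono : ∀ s t, 0 ≤ s → s ≤ t → t ≤ L → f s ≤ f t := fun s t hs hst htL => by
    have := hadd s (t - s) hs (sub_nonneg.2 hst) (by linarith)
    rw [add_sub_cancel] at this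
    linarith [hnonneg (t - s) (by linarith) (by linarith)]
  have hfL := hnonneg L hL.le le_rfl
  -- squeeze `x / L` between consecutive multiples of `1 / n`
  have hsqueeze : ∀ n : ℕ, 0 < n → |f x - x / L * f L| ≤ f L / n := by
    intro n hn
    have hn' : (0 : ℝ) < n := by exact_mod_cast hn
    set t := x / L * n with ht
    have htn : t ≤ n := mul_le_of_le_one_left hn'.le ((div_le_one hL).2 hxL)
    have hxt : x = t / n * L := by rw [ht]; field_simp
    have hlo := hmono (⌊t⌋₊ / n * L) x (by positivity)
      (by rw [hxt]; gcongr; exact Nat.floor_le (by positivity)) hxL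
    have hhi := hmono x (⌈t⌉₊ / n * L) hx0 (by rw [hxt]; gcongr; exact Nat.le_ceil t)
      (mul_le_of_le_one_left hL.le ((div_le_one hn').2 (by exact_mod_cast Nat.ceil_le.2 htn)))
    rw [apply_div_mul_of_add hadd hL hn (Nat.floor_le_of_le htn)] at hlo
    rw [apply_div_mul_of_add hadd hL hn (Nat.ceil_le.2 htn)] at hhi
    have hgap : (⌈t⌉₊ : ℝ) ≤ ⌊t⌋₊ + 1 := by exact_mod_cast Nat.ceil_le_floor_add_one t
    have hlo' : t / n * f L ≤ ⌊t⌋₊ / n * f L + f L / n := by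
      rw [show ⌊t⌋₊ / n * f L + f L / n = (⌊t⌋₊ + 1) / n * f L by ring]
      gcongr
      exact (Nat.le_ceil t).trans hgap
    have hhi' : ⌈t⌉₊ / n * f L ≤ t / n * f L + f L / n := by
      rw [show t / n * f L + f L / n = (t + 1) / n * f L by ring]
      gcongr
      exact hgap.trans (by linarith [Nat.floor_le (by positivity : 0 ≤ t)])
    rw [abs_le, show x / L = t / n by rw [hxt]; field_simp]
    constructor <;> linarith
  refine eq_of_abs_sub_nonpos (le_of_forall_pos_le_add fun ε hε => ?_)
  obtain ⟨n, hn⟩ := exists_nat_gt (f L / ε)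
  have hn0 : (0 : ℝ) < n := lt_of_le_of_lt (by positivity) hn
  calc |f x - x / L * f L| ≤ f L / n := hsqueeze n (by exact_mod_cast hn0)
    _ ≤ 0 + ε := by rw [zero_add, div_le_iff₀ hn0]; rw [div_lt_iff₀ hε] at hn; linarith

end FunctionalEquation

theorem mul_neg_of_not_nonneg_iff {s t : ℝ} (hs : s ≠ 0) (ht : t ≠ 0)
    (h : ¬(0 ≤ s ↔ 0 ≤ t)) : s * t < 0 := by
  rcases hs.lt_or_gt with hs | hs <;> rcases ht.lt_or_gt with ht | ht
  · exact absurd (iff_of_false hs.not_ge ht.not_ge) h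
  · exact mul_neg_of_neg_of_pos hs ht
  · exact mul_neg_of_pos_of_neg hs ht
  · exact absurd (iff_of_true hs.le ht.le) h

-- `θ ↦ x cos θ + y sin θ` (whose value at `0` is `x`) cannot change sign twice on `[0, π]`.
open Real in
theorem sinusoid_not_mul_neg_and_mul_neg {x y a c : ℝ} (ha : 0 ≤ a) (hac : a ≤ c) (hc : c ≤ π) :
    ¬(x * (x * cos a + y * sin a) < 0 ∧
      (x * cos a + y * sin a) * (x * cos c + y * sin c) < 0) := by
  rintro ⟨h0a, hac'⟩
  set ga := x * cos a + y * sin a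
  set gc := x * cos c + y * sin c
  have key : sin c * ga ^ 2 = sin (c - a) * (x * ga) + sin a * (ga * gc) := by
    simp only [ga, gc, sin_sub]; ring
  have hsc := sin_nonneg_of_nonneg_of_le_pi (ha.trans hac) hc
  have hsca := sin_nonneg_of_nonneg_of_le_pi (sub_nonneg.2 hac) (by linarith)
  have hsa := sin_nonneg_of_nonneg_of_le_pi ha (hac.trans hc)
  have hsa0 : sin a = 0 := by nlinarith [sq_nonneg ga]
  rcases (hac.trans hc).lt_or_eq with ha' | rfl
  · rw [sin_eq_zero_iff_of_lt_of_lt (by linarith [pi_pos]) ha'] at hsa0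
    subst hsa0
    simp only [cos_zero, sin_zero, mul_one, mul_zero, add_zero, ga] at h0a
    exact (mul_self_nonneg x).not_gt h0a
  · obtain rfl : c = π := le_antisymm hc hac
    exact (mul_self_nonneg ga).not_gt hac'

theorem Submodule.finrank_inf_lt_of_ne {K V : Type*} [DivisionRing K] [AddCommGroup V] [Module K V]
    [FiniteDimensional K V] {U W : Submodule K V} (h : finrank K U = finrank K W) (hne : U ≠ W) :
    finrank K ↥(U ⊓ W) < finrank K U := by
  refine Submodule.finrank_lt_finrank_of_lt (inf_le_left.lt_of_ne fun hU => hne ?_)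
  exact Submodule.eq_of_le_of_finrank_eq (hU ▸ inf_le_right) h

theorem eq_zero_of_pairwise_aedisjoint_of_measure_eq {α : Type*}
    [MeasurableSpace α] {μ : Measure α} [IsFiniteMeasure μ] {A : ℕ → Set α} {c : ENNReal}
    (hA : ∀ n, NullMeasurableSet (A n) μ) (hdisj : Pairwise fun i j => AEDisjoint μ (A i) (A j))
    (hc : ∀ n, μ (A n) = c) : c = 0 := by
  by_contra hc0
  apply measure_ne_top μ (⋃ n, A n)
  rw [measure_iUnion₀ hdisj hA, funext hc]
  exact ENNReal.tsum_const_eq_top_of_ne_zero hc0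

theorem integral_sum_sum_mul_indicator_comp {α β ι κ : Type*} [MeasurableSpace α]
    [MeasurableSpace β] [Fintype ι] [Fintype κ] {μ : Measure α} [IsFiniteMeasure μ] {φ : α → β}
    (hφ : Measurable φ) {S : ι → κ → Set β} (hS : ∀ i j, MeasurableSet (S i j))
    (c : ι → κ → ℝ) :
    ∫ x, ∑ i, ∑ j, c i j * (S i j).indicator 1 (φ x) ∂μ =
      ∑ i, ∑ j, c i j * (μ.map φ).real (S i j) := by
  have hint : ∀ i j, Integrable (fun x => c i j * (S i j).indicator 1 (φ x)) μ := fun i j =>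
    ((integrable_const (1 : ℝ)).indicator (hφ (hS i j))).const_mul _
  rw [integral_finsetSum _ fun i _ => integrable_finsetSum _ fun j _ => hint i j]
  refine sum_congr rfl fun i _ => ?_
  rw [integral_finsetSum _ fun j _ => hint i j]
  refine sum_congr rfl fun j _ => ?_
  rw [integral_const_mul, map_measureReal_apply hφ (hS i j), ← integral_indicator_one (hφ (hS i j))]
  rfl

section Isometries

variable {E : Type*} [NormedAddCommGroup E] [InnerProductSpace ℝ E] [FiniteDimensional ℝ E]

theorem exists_linearIsometryEquiv_apply_eq_of_orthonormal {ι : Type*} [Fintype ι]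
    {v w : ι → E} (hv : Orthonormal ℝ v) (hw : Orthonormal ℝ w) :
    ∃ g : E ≃ₗᵢ[ℝ] E, ∀ i, g (v i) = w i := by
  let b := Basis.span hv.linearIndependent
  have hb : Orthonormal ℝ b := by
    convert orthonormal_span hv
    simp [b, Basis.span_apply]
  have hbw : ⇑(b.constr ℝ w) ∘ b = w := funext fun i => b.constr_basis ℝ w i
  let L := (b.constr ℝ w).isometryOfOrthonormal hb (by rwa [hbw])
  refine ⟨L.extend.toLinearIsometryEquiv rfl, fun i => ?_⟩
  have hvi : v i = (b i : E) := by simp [b, Basis.span_apply]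
  rw [hvi, LinearIsometry.coe_toLinearIsometryEquiv, LinearIsometry.extend_apply]
  exact b.constr_basis ℝ w i

theorem exists_linearIsometryEquiv_apply_mem_iff {V W : Submodule ℝ E}
    (h : finrank ℝ V = finrank ℝ W) :
    ∃ g : E ≃ₗᵢ[ℝ] E, ∀ x, g x ∈ W ↔ x ∈ V := by
  let φ : V ≃ₗᵢ[ℝ] W := (stdOrthonormalBasis ℝ V).repr.trans
    ((stdOrthonormalBasis ℝ W).reindex (finCongr h.symm)).repr.symm
  let g := (W.subtypeₗᵢ.comp φ.toLinearIsometry).extend.toLinearIsometryEquiv rfl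
  have hle : V.map (g.toLinearEquiv : E →ₗ[ℝ] E) ≤ W := by
    rintro _ ⟨x, hx, rfl⟩
    have : g x = φ ⟨x, hx⟩ := LinearIsometry.extend_apply _ ⟨x, hx⟩
    simp [this]
  have heq : V.map (g.toLinearEquiv : E →ₗ[ℝ] E) = W :=
    Submodule.eq_of_le_of_finrank_eq hle (by rw [LinearEquiv.finrank_map_eq, h])
  refine ⟨g, fun x => ?_⟩
  rw [← heq, Submodule.mem_map_equiv]
  simp

theorem exists_injective_finrank_eq {V : Submodule ℝ E} (h0 : V ≠ ⊥) (htop : V ≠ ⊤) :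
    ∃ W : ℕ → Submodule ℝ E, Function.Injective W ∧ ∀ t, finrank ℝ (W t) = finrank ℝ V := by
  obtain ⟨u, huV, hu⟩ := V.exists_mem_ne_zero_of_ne_bot h0
  obtain ⟨e, heV, he⟩ := Vᗮ.exists_mem_ne_zero_of_ne_bot
    (by rwa [Ne, Submodule.orthogonal_eq_bot_iff])
  have hue : ⟪u, e⟫ = 0 := Submodule.inner_right_of_mem_orthogonal huV heV
  -- the images of `V` under the shears `T t` are distinct, as `⟪T t u, e⟫` recovers `t`
  let T : ℕ → E →ₗ[ℝ] E := fun t => LinearMap.id + (t : ℝ) • (innerₗ E u).smulRight e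
  have hT : ∀ t x, T t x = x + ((t : ℝ) * ⟪u, x⟫) • e := fun t x => by
    simp [T, mul_smul]
  have hinner : ∀ t x, ⟪u, T t x⟫ = ⟪u, x⟫ := fun t x => by
    simp [hT, inner_add_right, inner_smul_right, hue]
  have hinj : ∀ t, Function.Injective (T t) := fun t => by
    refine (injective_iff_map_eq_zero _).2 fun x hx => ?_
    have hux : ⟪u, x⟫ = 0 := by rw [← hinner t x, hx, inner_zero_right]
    simpa [hT, hux] using hx
  refine ⟨fun t => V.map (T t), fun s t hst => ?_, fun t =>
    (Submodule.equivMapOfInjective _ (hinj t) V).finrank_eq.symm⟩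
  obtain ⟨y, hyV, hy⟩ : T s u ∈ V.map (T t) := by
    simpa only [hst] using Submodule.mem_map_of_mem (f := T s) huV
  have huy : ⟪u, y⟫ = ⟪u, u⟫ := by rw [← hinner t y, hy, hinner]
  have hye : ⟪y, e⟫ = 0 := Submodule.inner_right_of_mem_orthogonal hyV heV
  have key := congrArg (fun z => ⟪z, e⟫) hy
  simp only [hT, inner_add_left, inner_smul_left, hye, hue, huy] at key
  have hts : (t : ℝ) = s := by simpa [hu, he] using key
  exact_mod_cast hts.symm

theorem exists_norm_eq_one_inner_eq_zero (h2 : 2 ≤ finrank ℝ E) (u : E) :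
    ∃ x : E, ‖x‖ = 1 ∧ ⟪u, x⟫ = 0 := by
  have hK : (ℝ ∙ u)ᗮ ≠ ⊥ := by
    intro hbot
    have := (ℝ ∙ u).finrank_add_finrank_orthogonal
    rw [hbot, finrank_bot, add_zero] at this
    have : finrank ℝ (ℝ ∙ u) ≤ 1 := (finrank_span_le_card {u}).trans (by simp)
    omega
  obtain ⟨x, hx, hx0⟩ := Submodule.exists_mem_ne_zero_of_ne_bot hK
  refine ⟨‖x‖⁻¹ • x, norm_smul_inv_norm hx0, ?_⟩
  rw [inner_smul_right, Submodule.mem_orthogonal_singleton_iff_inner_right.1 hx, mul_zero]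

theorem exists_orthonormal_eq_inner_smul_add (h2 : 2 ≤ finrank ℝ E) {u w : E}
    (hu : ‖u‖ = 1) (hw : ‖w‖ = 1) :
    ∃ x : E, Orthonormal ℝ ![u, x] ∧ w = ⟪u, w⟫ • u + √(1 - ⟪u, w⟫ ^ 2) • x := by
  set y := w - ⟪u, w⟫ • u with hy
  have huy : ⟪u, y⟫ = 0 := by
    rw [hy, inner_sub_right, real_inner_smul_right, real_inner_self_eq_norm_sq, hu]; ring
  have hnorm : √(1 - ⟪u, w⟫ ^ 2) = ‖y‖ := by
    rw [← Real.sqrt_sq (norm_nonneg y), hy, norm_sub_sq_real, norm_smul, inner_smul_right,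
      hu, hw, Real.norm_eq_abs, mul_one, sq_abs, real_inner_comm]
    ring_nf
  obtain ⟨x, hx, hux, hyx⟩ : ∃ x : E, ‖x‖ = 1 ∧ ⟪u, x⟫ = 0 ∧ y = ‖y‖ • x := by
    rcases eq_or_ne y 0 with hy0 | hy0
    · obtain ⟨x, hx, hux⟩ := exists_norm_eq_one_inner_eq_zero h2 u
      exact ⟨x, hx, hux, by simp [hy0]⟩
    · refine ⟨‖y‖⁻¹ • y, norm_smul_inv_norm hy0, by rw [inner_smul_right, huy, mul_zero], ?_⟩
      rw [smul_inv_smul₀ (norm_ne_zero_iff.2 hy0)]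
  refine ⟨x, ?_, ?_⟩
  · rw [orthonormal_iff_ite]
    simp [Fin.forall_fin_two, hu, hx, hux, real_inner_comm u x]
  · rw [hnorm, ← hyx, hy, add_sub_cancel]

theorem exists_linearIsometryEquiv_apply_eq_of_inner_eq (h2 : 2 ≤ finrank ℝ E)
    {u w u' w' : E} (hu : ‖u‖ = 1) (hw : ‖w‖ = 1) (hu' : ‖u'‖ = 1) (hw' : ‖w'‖ = 1)
    (h : ⟪u, w⟫ = ⟪u', w'⟫) :
    ∃ g : E ≃ₗᵢ[ℝ] E, g u = u' ∧ g w = w' := by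
  obtain ⟨x, hx, hwx⟩ := exists_orthonormal_eq_inner_smul_add h2 hu hw
  obtain ⟨x', hx', hwx'⟩ := exists_orthonormal_eq_inner_smul_add h2 hu' hw'
  obtain ⟨g, hg⟩ := exists_linearIsometryEquiv_apply_eq_of_orthonormal hx hx'
  have hgu : g u = u' := hg 0
  have hgx : g x = x' := hg 1
  refine ⟨g, hgu, ?_⟩
  rw [hwx, hwx', map_add, map_smul, map_smul, hgu, hgx, h]

end Isometries

section InvariantMeasure

variable {E : Type*} [NormedAddCommGroup E] [InnerProductSpace ℝ E] [FiniteDimensional ℝ E]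
  [MeasurableSpace E] [BorelSpace E] {ν : Measure E}

theorem measure_submodule_eq_zero [IsFiniteMeasure ν]
    (hν : ∀ g : E ≃ₗᵢ[ℝ] E, MeasurePreserving g ν ν) (h0 : ν {0} = 0)
    {V : Submodule ℝ E} (hV : V ≠ ⊤) : ν V = 0 := by
  induction hm : finrank ℝ V using Nat.strong_induction_on generalizing V with
  | _ m ih =>
  rcases eq_or_ne V ⊥ with rfl | hbot
  · rwa [Submodule.bot_coe]
  obtain ⟨W, hWinj, hW⟩ := exists_injective_finrank_eq hbot hV
  have hmeas : ∀ U : Submodule ℝ E, MeasurableSet (U : Set E) := fun U =>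
    U.closed_of_finiteDimensional.measurableSet
  have hWtop : ∀ t, W t ≠ ⊤ := fun t htop => by
    have := Submodule.finrank_lt hV
    rw [← hW t, htop, finrank_top] at this
    exact this.false
  refine eq_zero_of_pairwise_aedisjoint_of_measure_eq (μ := ν) (A := fun t => (W t : Set E))
    (fun t => (hmeas _).nullMeasurableSet) (fun s t hst => ?_) (fun t => ?_)
  · change ν (W s ∩ W t : Set E) = 0
    rw [← Submodule.coe_inf]
    refine ih _ ?_ (ne_top_of_le_ne_top (hWtop s) inf_le_left) rfl
    rw [← hm, ← hW s]
    exact Submodule.finrank_inf_lt_of_ne ((hW s).trans (hW t).symm) (hWinj.ne hst)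
  · obtain ⟨g, hg⟩ := exists_linearIsometryEquiv_apply_mem_iff ((hW t).symm)
    rw [← (hν g).measure_preimage (hmeas _).nullMeasurableSet]
    congr 1
    ext x
    exact hg x

theorem measure_inner_eq_zero [IsFiniteMeasure ν]
    (hν : ∀ g : E ≃ₗᵢ[ℝ] E, MeasurePreserving g ν ν) (h0 : ν {0} = 0)
    {u : E} (hu : u ≠ 0) : ν {x | ⟪x, u⟫ = 0} = 0 := by
  have hV : (ℝ ∙ u)ᗮ ≠ ⊤ := by
    rwa [Ne, Submodule.orthogonal_eq_top_iff, Submodule.span_singleton_eq_bot]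
  convert measure_submodule_eq_zero hν h0 hV
  ext x
  exact Submodule.mem_orthogonal_singleton_iff_inner_left.symm

end InvariantMeasure

section SeparatingNormals

variable {E : Type*} [NormedAddCommGroup E] [InnerProductSpace ℝ E]

def separatingNormals (u w : E) : Set E := {r | ¬(0 ≤ ⟪r, u⟫ ↔ 0 ≤ ⟪r, w⟫)}

theorem preimage_separatingNormals (g : E ≃ₗᵢ[ℝ] E) (u w : E) :
    g ⁻¹' separatingNormals (g u) (g w) = separatingNormals u w := by
  ext r
  simp [separatingNormals]

theorem cutVal_sign_eq_sum_indicator (n : ℕ) (ω : Fin n → Fin n → ℝ) (v : Fin n → E) (r : E) :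
    cutVal n ω (fun i => if 0 ≤ ⟪r, v i⟫ then 1 else -1) =
      ∑ i, ∑ j, (if i < j then ω i j else 0) * (separatingNormals (v i) (v j)).indicator 1 r := by
  have hsign : ∀ i j, (1 / 2 : ℝ) * (1 - (if 0 ≤ ⟪r, v i⟫ then 1 else -1) *
      (if 0 ≤ ⟪r, v j⟫ then 1 else -1)) = (separatingNormals (v i) (v j)).indicator 1 r := by
    intro i j
    by_cases hi : 0 ≤ ⟪r, v i⟫ <;> by_cases hj : 0 ≤ ⟪r, v j⟫ <;>
      simp [separatingNormals, hi, hj] <;> norm_num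
  rw [cutVal, mul_sum]
  refine sum_congr rfl fun i _ => ?_
  rw [mul_sum]
  refine sum_congr rfl fun j _ => ?_
  by_cases hij : i < j
  · simp only [hij, if_true, ← hsign]
    ring
  · simp [hij]

noncomputable def greatCircle (e : Fin 2 → E) (θ : ℝ) : E := Real.cos θ • e 0 + Real.sin θ • e 1

section greatCircle

variable {e : Fin 2 → E}

theorem inner_greatCircle (r : E) (θ : ℝ) :
    ⟪r, greatCircle e θ⟫ = ⟪r, e 0⟫ * Real.cos θ + ⟪r, e 1⟫ * Real.sin θ := by
  simp only [greatCircle, inner_add_right, real_inner_smul_right]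
  ring

theorem inner_greatCircle_greatCircle (he : Orthonormal ℝ e) (a b : ℝ) :
    ⟪greatCircle e a, greatCircle e b⟫ = Real.cos (b - a) := by
  have h := orthonormal_iff_ite.1 he
  simp only [greatCircle, inner_add_left, inner_add_right, real_inner_smul_left,
    real_inner_smul_right, h, Real.cos_sub]
  simp

theorem norm_greatCircle (he : Orthonormal ℝ e) (θ : ℝ) : ‖greatCircle e θ‖ = 1 := by
  have h := inner_greatCircle_greatCircle he θ θ
  rwa [sub_self, Real.cos_zero, real_inner_self_eq_norm_sq,
    pow_eq_one_iff_of_nonneg (norm_nonneg _) two_ne_zero] at h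

theorem greatCircle_zero : greatCircle e 0 = e 0 := by simp [greatCircle]

theorem greatCircle_pi : greatCircle e Real.pi = -e 0 := by simp [greatCircle]

theorem inter_separatingNormals_greatCircle_subset {a b : ℝ} (ha : 0 ≤ a) (hb : 0 ≤ b)
    (hab : a + b ≤ Real.pi) :
    separatingNormals (e 0) (greatCircle e a) ∩
        separatingNormals (greatCircle e a) (greatCircle e (a + b)) ⊆
      {r | ⟪r, e 0⟫ = 0} ∪ {r | ⟪r, greatCircle e a⟫ = 0} ∪
        {r | ⟪r, greatCircle e (a + b)⟫ = 0} := by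
  rintro r ⟨h0a, haab⟩
  by_contra hr
  simp only [Set.mem_union, Set.mem_ofPred_eq, not_or] at hr
  obtain ⟨⟨h0, ha0⟩, hab0⟩ := hr
  simp only [separatingNormals, Set.mem_ofPred_eq, inner_greatCircle] at h0a haab
  rw [inner_greatCircle] at ha0 hab0
  exact sinusoid_not_mul_neg_and_mul_neg ha (le_add_of_nonneg_right hb) hab
    ⟨mul_neg_of_not_nonneg_iff h0 ha0 h0a, mul_neg_of_not_nonneg_iff ha0 hab0 haab⟩

end greatCircle

variable [MeasurableSpace E] [BorelSpace E]

theorem measurableSet_separatingNormals (u w : E) : MeasurableSet (separatingNormals u w) := by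
  unfold separatingNormals
  measurability

variable [FiniteDimensional ℝ E] {ν : Measure E}

theorem measure_separatingNormals_eq_of_inner_eq
    (hν : ∀ g : E ≃ₗᵢ[ℝ] E, MeasurePreserving g ν ν) (h2 : 2 ≤ finrank ℝ E)
    {u w u' w' : E} (hu : ‖u‖ = 1) (hw : ‖w‖ = 1) (hu' : ‖u'‖ = 1) (hw' : ‖w'‖ = 1)
    (h : ⟪u, w⟫ = ⟪u', w'⟫) :
    ν (separatingNormals u w) = ν (separatingNormals u' w') := by
  obtain ⟨g, rfl, rfl⟩ := exists_linearIsometryEquiv_apply_eq_of_inner_eq h2 hu hw hu' hw' h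
  rw [← preimage_separatingNormals g u w,
    (hν g).measure_preimage (measurableSet_separatingNormals _ _).nullMeasurableSet]

theorem measure_separatingNormals_greatCircle_add [IsFiniteMeasure ν]
    (hν : ∀ g : E ≃ₗᵢ[ℝ] E, MeasurePreserving g ν ν) (h0 : ν {0} = 0) (h2 : 2 ≤ finrank ℝ E)
    {e : Fin 2 → E} (he : Orthonormal ℝ e) {a b : ℝ} (ha : 0 ≤ a) (hb : 0 ≤ b)
    (hab : a + b ≤ Real.pi) :
    ν (separatingNormals (e 0) (greatCircle e (a + b))) =
      ν (separatingNormals (e 0) (greatCircle e a)) +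
        ν (separatingNormals (e 0) (greatCircle e b)) := by
  set X := separatingNormals (e 0) (greatCircle e a)
  set Y := separatingNormals (greatCircle e a) (greatCircle e (a + b))
  have hnull : ∀ θ, ν {r | ⟪r, greatCircle e θ⟫ = 0} = 0 := fun θ =>
    measure_inner_eq_zero hν h0 (norm_ne_zero_iff.1 (by simp [norm_greatCircle he]))
  have hXY : ν (X ∩ Y) = 0 := by
    refine measure_mono_null (inter_separatingNormals_greatCircle_subset ha hb hab) ?_
    rw [← greatCircle_zero (e := e)]
    exact measure_union_null (measure_union_null (hnull 0) (hnull a)) (hnull (a + b))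
  have hXYT : separatingNormals (e 0) (greatCircle e (a + b)) = (X ∪ Y) \ (X ∩ Y) := by
    ext r
    simp only [X, Y, separatingNormals, Set.mem_sdiff, Set.mem_union, Set.mem_inter_iff,
      Set.mem_ofPred_eq]
    tauto
  have hY : ν Y = ν (separatingNormals (e 0) (greatCircle e b)) := by
    refine measure_separatingNormals_eq_of_inner_eq hν h2 (norm_greatCircle he a)
      (norm_greatCircle he _) (he.1 0) (norm_greatCircle he b) ?_
    rw [← greatCircle_zero (e := e), inner_greatCircle_greatCircle he,
      inner_greatCircle_greatCircle he, add_sub_cancel_left, sub_zero]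
  rw [hXYT, measure_sdiff_null hXY,
    measure_union₀ (measurableSet_separatingNormals _ _).nullMeasurableSet hXY, hY]

theorem measureReal_separatingNormals_greatCircle [IsFiniteMeasure ν]
    (hν : ∀ g : E ≃ₗᵢ[ℝ] E, MeasurePreserving g ν ν) (h0 : ν {0} = 0) (h2 : 2 ≤ finrank ℝ E)
    {e : Fin 2 → E} (he : Orthonormal ℝ e) {θ : ℝ} (hθ0 : 0 ≤ θ) (hθπ : θ ≤ Real.pi) :
    ν.real (separatingNormals (e 0) (greatCircle e θ)) = θ / Real.pi * ν.real Set.univ := by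
  have hπ : separatingNormals (e 0) (greatCircle e Real.pi) = {r | ⟪r, e 0⟫ = 0}ᶜ := by
    ext r
    simp only [separatingNormals, greatCircle_pi, inner_neg_right, neg_nonneg,
      Set.mem_ofPred_eq, Set.mem_compl_iff]
    grind
  have hH : ν {r | ⟪r, e 0⟫ = 0} = 0 := measure_inner_eq_zero hν h0 (he.ne_zero 0)
  have hlin := eq_div_mul_of_add_of_nonneg
    (f := fun θ => ν.real (separatingNormals (e 0) (greatCircle e θ)))
    Real.pi_pos (fun _ _ _ => measureReal_nonneg) (fun a b ha hb hab => by
      simp only [measureReal_def]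
      rw [measure_separatingNormals_greatCircle_add hν h0 h2 he ha hb hab,
        ENNReal.toReal_add (measure_ne_top _ _) (measure_ne_top _ _)]) hθ0 hθπ
  rw [hlin, hπ, measureReal_compl (by measurability), measureReal_def (s := {r | ⟪r, e 0⟫ = 0}),
    hH, ENNReal.toReal_zero, sub_zero]

theorem measureReal_separatingNormals [IsFiniteMeasure ν]
    (hν : ∀ g : E ≃ₗᵢ[ℝ] E, MeasurePreserving g ν ν) (h0 : ν {0} = 0) (h2 : 2 ≤ finrank ℝ E)
    {u w : E} (hu : ‖u‖ = 1) (hw : ‖w‖ = 1) :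
    ν.real (separatingNormals u w) = Real.arccos ⟪u, w⟫ / Real.pi * ν.real Set.univ := by
  let b := stdOrthonormalBasis ℝ E
  set e : Fin 2 → E := fun i => b (Fin.castLE h2 i)
  have he : Orthonormal ℝ e := b.orthonormal.comp _ (Fin.castLE_injective h2)
  have hc : |⟪u, w⟫| ≤ 1 := by simpa [hu, hw] using abs_real_inner_le_norm u w
  have hinner : ⟪e 0, greatCircle e (Real.arccos ⟪u, w⟫)⟫ = ⟪u, w⟫ := by
    rw [← greatCircle_zero (e := e), inner_greatCircle_greatCircle he, sub_zero,
      Real.cos_arccos (abs_le.1 hc).1 (abs_le.1 hc).2]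
  rw [measureReal_def, measure_separatingNormals_eq_of_inner_eq hν h2 hu hw (he.1 0)
    (norm_greatCircle he _) hinner.symm, ← measureReal_def,
    measureReal_separatingNormals_greatCircle hν h0 h2 he (Real.arccos_nonneg _)
      (Real.arccos_le_pi _)]

end SeparatingNormals

section Sphere

variable {E : Type*} [NormedAddCommGroup E] [MeasurableSpace E] [BorelSpace E]

theorem map_subtype_val_sphere_singleton_zero (μ : Measure (sphere (0 : E) 1)) :
    μ.map ((↑) : sphere (0 : E) 1 → E) {0} = 0 := by
  rw [Measure.map_apply measurable_subtype_coe (measurableSet_singleton 0)]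
  convert measure_empty (μ := μ)
  ext x
  simp [ne_zero_of_mem_unit_sphere x]

variable [NormedSpace ℝ E]

theorem measurePreserving_map_subtype_val {μ : Measure (sphere (0 : E) 1)}
    (hμ : ∀ g : E ≃ₗᵢ[ℝ] E,
      μ.map (fun x : sphere (0 : E) 1 => (⟨g x, by simp⟩ : sphere (0 : E) 1)) = μ)
    (g : E ≃ₗᵢ[ℝ] E) : MeasurePreserving g (μ.map (↑)) (μ.map (↑)) := by
  refine ⟨g.continuous.measurable, ?_⟩
  conv_rhs => rw [← hμ g]
  rw [Measure.map_map g.continuous.measurable measurable_subtype_coe,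
    Measure.map_map measurable_subtype_coe (by fun_prop)]
  rfl

end Sphere

theorem gw_expected_cut_value (d : ℕ) (hd : 2 ≤ d)
    (μ : Measure (sphere (0 : EuclideanSpace ℝ (Fin d)) 1))
    [IsProbabilityMeasure μ]
    (hinv : ∀ f : EuclideanSpace ℝ (Fin d) ≃ₗᵢ[ℝ] EuclideanSpace ℝ (Fin d),
      Measure.map
        (fun x : sphere (0 : EuclideanSpace ℝ (Fin d)) 1 =>
          (⟨f x, by
            simp [mem_sphere_zero_iff_norm, f.norm_map, x.2]⟩ :
              sphere (0 : EuclideanSpace ℝ (Fin d)) 1)) μ = μ)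
    (n : ℕ) (ω : Fin n → Fin n → ℝ)
    (v : Fin n → EuclideanSpace ℝ (Fin d)) (hv : ∀ i, ‖v i‖ = 1) :
    ∫ r : sphere (0 : EuclideanSpace ℝ (Fin d)) 1,
        cutVal n ω (fun i =>
          if 0 ≤ ⟪(r : EuclideanSpace ℝ (Fin d)), v i⟫ then 1 else -1) ∂μ
      = (1 / Real.pi) *
          ∑ i : Fin n, ∑ j : Fin n,
            (if i < j then ω i j * Real.arccos ⟪v i, v j⟫ else 0) := by
  set ν := μ.map ((↑) : sphere (0 : EuclideanSpace ℝ (Fin d)) 1 → EuclideanSpace ℝ (Fin d))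
  have hν := measurePreserving_map_subtype_val hinv
  have h0 : ν {0} = 0 := map_subtype_val_sphere_singleton_zero μ
  have h2 : 2 ≤ finrank ℝ (EuclideanSpace ℝ (Fin d)) := by simpa using hd
  have : IsProbabilityMeasure ν := Measure.isProbabilityMeasure_map (by fun_prop)
  have hS := fun i j => measurableSet_separatingNormals (v i) (v j)
  calc _ = ∫ r, ∑ i, ∑ j, (if i < j then ω i j else 0) *
          (separatingNormals (v i) (v j)).indicator 1 (r : EuclideanSpace ℝ (Fin d)) ∂μ := by
        simp_rw [cutVal_sign_eq_sum_indicator]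
    _ = ∑ i, ∑ j, (if i < j then ω i j else 0) * (Real.arccos ⟪v i, v j⟫ / Real.pi) := by
        rw [integral_sum_sum_mul_indicator_comp measurable_subtype_coe hS]
        simp_rw [measureReal_separatingNormals hν h0 h2 (hv _) (hv _), probReal_univ, mul_one]
    _ = _ := by
        simp_rw [mul_sum]
        refine sum_congr rfl fun i _ => sum_congr rfl fun j _ => ?_
        split_ifs <;> ring
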